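/- arXiv:1312.4231 — 3 statements merged into one kernel-verified Lean document; each statement's English description precedes it below -/
import Mathlib

section
/- The consistent sets of the dependence space (U, Θ_M) induced by a matroid M are exactly the independent sets of M: IND_{Θ_M} = I(M). -/
open Set

theorem consistent_iff_indep_general {α : Type*} (M : Matroid α)
    (X : Set α) :
    (∀ Y, Y ⊆ M.E → M.closure Y = M.closure X → Y ⊆ X → Y = X) ↔ M.Indep X := by
  constructor
  · intro hmin
    obtain ⟨I, hI⟩ := M.exists_isBasis' X
    exact hmin I hI.indep.subset_ground hI.closure_eq_closure hI.subset ▸ hI.indep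
  · intro hX Y _ hcl hYX
    by_contra hne
    exact (hX.closure_ssubset_closure (hYX.ssubset_of_ne hne)).ne hcl

theorem consistent_iff_indep {α : Type*} (M : Matroid α) [M.Finite]
    (X : Set α) (hX : X ⊆ M.E) :
    (∀ Y, Y ⊆ M.E → M.closure Y = M.closure X → Y ⊆ X → Y = X) ↔ M.Indep X :=
  consistent_iff_indep_general M X
end

section
/- Let M be a matroid on finite U and X ⊆ U. A set Y ⊆ X is a reduct of X in the dependence space (U, Θ_M) (i.e., cl_M(Y) = cl_M(X) and Y is minimal in its Θ_M-class) if and only if Y is a basis of the restriction matroid M|X. -/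
open Set

namespace Matroid

variable {α : Type*} {M : Matroid α} {X Y : Set α}

lemma indep_iff_forall_subset_closure_eq_imp_eq (hY : Y ⊆ M.E) :
    M.Indep Y ↔ ∀ Z, Z ⊆ M.E → M.closure Z = M.closure Y → Z ⊆ Y → Z = Y := by
  rw [indep_iff_forall_closure_ssubset_of_ssubset hY]
  refine ⟨fun h Z _ hcl hZY ↦ by_contra fun hne ↦ (h (hZY.ssubset_of_ne hne)).ne hcl,
    fun h Z hZY ↦ (M.closure_subset_closure hZY.subset).ssubset_of_ne fun hcl ↦ ?_⟩
  exact hZY.ne (h Z (hZY.subset.trans hY) hcl hZY.subset)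

lemma isBasis_iff_indep_closure_eq (hYX : Y ⊆ X) (hX : X ⊆ M.E) :
    M.IsBasis Y X ↔ M.Indep Y ∧ M.closure Y = M.closure X := by
  refine ⟨fun hB ↦ ⟨hB.indep, hB.closure_eq_closure⟩, fun ⟨hY, hcl⟩ ↦ ?_⟩
  exact isBasis_iff_indep_subset_closure.2 ⟨hY, hYX, hcl ▸ M.subset_closure X hX⟩

end Matroid

theorem reduct_iff_basis_general {α : Type*} (M : Matroid α)
    (X Y : Set α) (hX : X ⊆ M.E) (hYX : Y ⊆ X) :
    (M.closure Y = M.closure X ∧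
      ∀ Z, Z ⊆ M.E → M.closure Z = M.closure Y → Z ⊆ Y → Z = Y) ↔
    M.IsBasis Y X := by
  rw [M.isBasis_iff_indep_closure_eq hYX hX,
    M.indep_iff_forall_subset_closure_eq_imp_eq (hYX.trans hX), and_comm]

theorem reduct_iff_basis {α : Type*} (M : Matroid α) [M.Finite]
    (X Y : Set α) (hX : X ⊆ M.E) (hYX : Y ⊆ X) :
    (M.closure Y = M.closure X ∧
      ∀ Z, Z ⊆ M.E → M.closure Z = M.closure Y → Z ⊆ Y → Z = Y) ↔
    M.IsBasis Y X :=
  reduct_iff_basis_general M X Y hX hYX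
end

section
/- Let (U, Θ) be a dependence space (Θ an equivalence relation on 2^U compatible with unions) and X ⊆ U. Then the set of reducts of X equals the set of minimal elements (under inclusion) of {Y ⊆ X : (X, Y) ∈ Θ}. -/
open Set

theorem reducts_eq_minimal {α : Type*} (U : Set α) (Θ : Set α → Set α → Prop)
    (hrefl : ∀ A ⊆ U, Θ A A)
    (hsymm : ∀ A B, Θ A B → Θ B A)
    (htrans : ∀ A B C, Θ A B → Θ B C → Θ A C)
    (hcong : ∀ B₁ C₁ B₂ C₂, Θ B₁ C₁ → Θ B₂ C₂ → Θ (B₁ ∪ B₂) (C₁ ∪ C₂))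
    (X : Set α) (hX : X ⊆ U) :
    {Y | Y ⊆ X ∧ Θ X Y ∧ ∀ Z ⊆ U, Θ Y Z → Z ⊆ Y → Z = Y} =
      {Y | Minimal (fun Y => Y ⊆ X ∧ Θ X Y) Y} := by
  ext Y
  simp only [mem_setOf_eq]
  constructor
  · rintro ⟨hYX, hXY, hcons⟩
    refine ⟨⟨hYX, hXY⟩, ?_⟩
    rintro Z ⟨hZX, hXZ⟩ hZY
    have : Z = Y := hcons Z (hZX.trans hX) (htrans Y X Z (hsymm X Y hXY) hXZ) hZY
    exact this ▸ le_refl _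
  · rintro ⟨⟨hYX, hXY⟩, hmin⟩
    refine ⟨hYX, hXY, ?_⟩
    intro Z hZU hYZ hZY
    exact le_antisymm hZY (hmin ⟨hZY.trans hYX, htrans X Y Z hXY hYZ⟩ hZY)
end
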